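/- Let r > 0 and let s, c, α, H be real numbers with s² + c² = 1, s ≠ 0, σ := (1/3)sH + 2cα ≠ 0 and η := (2/3)sH + 2cα ≠ 0, and set λ₁ := (−(1/3)cH + 2sα)/(rσ), λ₂ := −c/(sr), λ₃ := (−(2/3)cH + 2sα)/(rη). Then λ₁ − λ₂ = 2α/(srσ), λ₃ − λ₂ = 2α/(srη) and λ₁ − λ₃ = (2/3)αH/(rση). Consequently: (1) if αH ≠ 0 then λ₁, λ₂, λ₃ are pairwise distinct; (2) if α ≠ 0 and H = 0 then λ₁ ≠ λ₂, λ₂ ≠ λ₃ and λ₁ = λ₃; (3) if α = 0 then λ₁ = λ₂ = λ₃. -/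
import Mathlib


/-- the differences of the eigenvalues `λ₁, λ₂, λ₃` of `a = A⁻¹B` satisfy
`λ₁ − λ₂ = 2α/(srσ)`, `λ₃ − λ₂ = 2α/(srη)`, `λ₁ − λ₃ = (2/3)αH/(rση)`, and consequently:
(1) if `αH ≠ 0` the eigenvalues are pairwise distinct; (2) if `α ≠ 0, H = 0` then
`λ₁ ≠ λ₂`, `λ₂ ≠ λ₃`, `λ₁ = λ₃`; (3) if `α = 0` then `λ₁ = λ₂ = λ₃`. -/
theorem stmt_14 (r s c α H σ η : ℝ) (hr : 0 < r) (hsc : s ^ 2 + c ^ 2 = 1) (hs : s ≠ 0)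
    (hσdef : σ = (1 / 3) * s * H + 2 * c * α) (hηdef : η = (2 / 3) * s * H + 2 * c * α)
    (hσ : σ ≠ 0) (hη : η ≠ 0)
    (lam₁ lam₂ lam₃ : ℝ)
    (hlam₁ : lam₁ = (-((1 / 3) * c * H) + 2 * s * α) / (r * σ))
    (hlam₂ : lam₂ = -c / (s * r))
    (hlam₃ : lam₃ = (-((2 / 3) * c * H) + 2 * s * α) / (r * η)) :
    (lam₁ - lam₂ = 2 * α / (s * r * σ)
      ∧ lam₃ - lam₂ = 2 * α / (s * r * η)
      ∧ lam₁ - lam₃ = (2 / 3) * α * H / (r * σ * η))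
    ∧ (α * H ≠ 0 → lam₁ ≠ lam₂ ∧ lam₂ ≠ lam₃ ∧ lam₁ ≠ lam₃)
    ∧ (α ≠ 0 → H = 0 → lam₁ ≠ lam₂ ∧ lam₂ ≠ lam₃ ∧ lam₁ = lam₃)
    ∧ (α = 0 → lam₁ = lam₂ ∧ lam₂ = lam₃) := by
  have hr' : r ≠ 0 := ne_of_gt hr
  have d1 : lam₁ - lam₂ = 2 * α / (s * r * σ) := by
    have key : s * (-((1 / 3) * c * H) + 2 * s * α) + c * σ = 2 * α := by
      rw [hσdef]; linear_combination (2 * α) * hsc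
    rw [hlam₁, hlam₂, ← key]; field_simp; ring
  have d2 : lam₃ - lam₂ = 2 * α / (s * r * η) := by
    have key : s * (-((2 / 3) * c * H) + 2 * s * α) + c * η = 2 * α := by
      rw [hηdef]; linear_combination (2 * α) * hsc
    rw [hlam₃, hlam₂, ← key]; field_simp; ring
  have d3 : lam₁ - lam₃ = (2 / 3) * α * H / (r * σ * η) := by
    have key : η * (-((1 / 3) * c * H) + 2 * s * α) - σ * (-((2 / 3) * c * H) + 2 * s * α)
        = (2 / 3) * α * H := by
      rw [hσdef, hηdef]; linear_combination ((2 / 3) * α * H) * hsc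
    rw [hlam₁, hlam₃, ← key]; field_simp
  refine ⟨⟨d1, d2, d3⟩, ?_, ?_, ?_⟩
  · intro hαH
    have hα : α ≠ 0 := fun h => hαH (by simp [h])
    have hH : H ≠ 0 := fun h => hαH (by simp [h])
    refine ⟨sub_ne_zero.mp ?_, ?_, sub_ne_zero.mp ?_⟩
    · rw [d1]
      exact div_ne_zero (by positivity) (mul_ne_zero (mul_ne_zero hs hr') hσ)
    · symm
      refine sub_ne_zero.mp ?_
      rw [d2]
      exact div_ne_zero (by positivity) (mul_ne_zero (mul_ne_zero hs hr') hη)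
    · rw [d3]
      exact div_ne_zero (by positivity) (mul_ne_zero (mul_ne_zero hr' hσ) hη)
  · intro hα hH
    refine ⟨sub_ne_zero.mp ?_, ?_, ?_⟩
    · rw [d1]
      exact div_ne_zero (by positivity) (mul_ne_zero (mul_ne_zero hs hr') hσ)
    · symm
      refine sub_ne_zero.mp ?_
      rw [d2]
      exact div_ne_zero (by positivity) (mul_ne_zero (mul_ne_zero hs hr') hη)
    · have h0 : lam₁ - lam₃ = 0 := by rw [d3, hH]; ring
      linarith
  · intro hα
    have h1 : lam₁ - lam₂ = 0 := by rw [d1, hα]; ring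
    have h2 : lam₃ - lam₂ = 0 := by rw [d2, hα]; ring
    exact ⟨by linarith, by linarith⟩
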